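/- Let X = ℂ/Γ be a complex torus and f : X → ℙ¹ a holomorphic map of degree 3. If t ∈ X satisfies f(z − t) = f(z) for all z ∈ X, then t = 0. In other words, the translation action of X on degree-3 elliptic functions by pre-composition is free. -/

import Mathlib

open Filter

/-- The lattice `ω₁ℤ + ω₂ℤ` as a subset of `ℂ`. -/
def latticeOf (ω₁ ω₂ : ℂ) : Set ℂ :=
  {z : ℂ | ∃ m n : ℤ, z = (m : ℂ) * ω₁ + (n : ℂ) * ω₂}

/-- A fundamental domain for the torus `ℂ/(ω₁ℤ + ω₂ℤ)`. -/
def fundDomain (ω₁ ω₂ : ℂ) : Set ℂ :=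
  {z : ℂ | ∃ s t : ℝ, s ∈ Set.Ico (0 : ℝ) 1 ∧ t ∈ Set.Ico (0 : ℝ) 1 ∧
    z = (s : ℂ) * ω₁ + (t : ℂ) * ω₂}

/-- `f` has a pole at `p`. -/
def IsPole (f : ℂ → ℂ) (p : ℂ) : Prop :=
  Tendsto (fun z => ‖f z‖) (nhdsWithin p {p}ᶜ) atTop

/-- `f` has order `n` at `p`: near `p`, `f(z) = (z-p)^n g(z)` with `g`
analytic and nonvanishing at `p`. -/
def HasOrderAt (f : ℂ → ℂ) (p : ℂ) (n : ℤ) : Prop :=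
  ∃ g : ℂ → ℂ, AnalyticAt ℂ g p ∧ g p ≠ 0 ∧
    ∀ᶠ z in nhdsWithin p {p}ᶜ, f z = (z - p) ^ n * g z

/-- `f` is meromorphic on `ℂ` (with a well-defined finite order everywhere). -/
def MeroOn (f : ℂ → ℂ) : Prop := ∀ p : ℂ, ∃ n : ℤ, HasOrderAt f p n

open Classical in
/-- The order of `f` at `p` (junk value `0` if undefined). -/
noncomputable def orderAt (f : ℂ → ℂ) (p : ℂ) : ℤ :=
  if h : ∃ n : ℤ, HasOrderAt f p n then h.choose else 0

/-- `f` is a degree-`n` elliptic function for `ω₁ℤ + ω₂ℤ`: the total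
multiplicity of its poles in a fundamental domain is `n`. -/
def HasDegree (ω₁ ω₂ : ℂ) (f : ℂ → ℂ) (n : ℕ) : Prop :=
  ∃ P : Finset ℂ, (P : Set ℂ) = {z ∈ fundDomain ω₁ ω₂ | IsPole f z} ∧
    ∑ p ∈ P, (orderAt f p).natAbs = n

open Classical in
/-- The ramification index of `f` at `p`: the multiplicity with which `f`
attains its value (`∞` at poles) at `p`. -/
noncomputable def ramIndex (f : ℂ → ℂ) (p : ℂ) : ℕ :=
  if IsPole f p then (orderAt f p).natAbs
  else (orderAt (fun z => f z - f p) p).toNat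


/-!
Translation by `t` permutes the poles of `f` in the fundamental domain and preserves their
orders. If it fixes one of them, then `t ∈ Γ`. Otherwise the total pole order `3` forces three
simple poles permuted cyclically, so `3t ∈ Γ` and `f` has a single simple pole `q` modulo
`Λ = Γ + ℤt`, a lattice of odd index over `Γ`, so that no half-period of `Γ` lies in `Λ`.
No such `f` exists: `f z + f (2q - z)` has removable singularities, so it is a constant `c`
by Liouville, and `g = f - c/2` vanishes at `q + μ` for every half-period `μ` of `Λ`. Then
`g z * g (z + ω₁/2)` has removable singularities too, since every pole of one factor is a zero
of the other; so it is constant, and it vanishes at `q + ω₂/2`. A product of two meromorphic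
functions that do not vanish identically cannot be `0`.
-/

open Function Topology

theorem hasOrderAt_iff {f : ℂ → ℂ} {p : ℂ} {n : ℤ} :
    HasOrderAt f p n ↔ MeromorphicAt f p ∧ meromorphicOrderAt f p = n := by
  refine ⟨fun ⟨g, hg, hgp, hfg⟩ => ?_, fun ⟨hf, hn⟩ => by
    simpa [HasOrderAt] using (meromorphicOrderAt_eq_int_iff hf).1 hn⟩
  have hf : MeromorphicAt f p :=
    (((MeromorphicAt.id p).sub (.const p p)).zpow n |>.mul hg.meromorphicAt).congr
      (hfg.mono fun z hz => hz.symm)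
  exact ⟨hf, (meromorphicOrderAt_eq_int_iff hf).2 ⟨g, hg, hgp, by simpa using hfg⟩⟩

theorem Function.Periodic.meromorphicOrderAt_add {f : ℂ → ℂ} {c : ℂ} (hc : Periodic f c)
    (z : ℂ) : meromorphicOrderAt f (z + c) = meromorphicOrderAt f z := by
  rw [← meromorphicOrderAt_comp_add_const_eq_meromorphicOrderAt]
  exact congrArg (meromorphicOrderAt · z) (funext hc)

theorem Function.periodic_of_mem_span {α β : Type*} [AddCommGroup α] {f : α → β} {s : Set α}
    (hs : ∀ c ∈ s, Periodic f c) {c : α} (hc : c ∈ Submodule.span ℤ s) : Periodic f c := by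
  induction hc using Submodule.span_induction with
  | mem c hc => exact hs c hc
  | zero => exact fun z => by simp
  | add a b _ _ ha hb => exact ha.add_period hb
  | smul n a _ ha => exact ha.zsmul n

theorem meromorphicOrderAt_sub_const {f : ℂ → ℂ} {z : ℂ} (hneg : meromorphicOrderAt f z < 0)
    (c : ℂ) : meromorphicOrderAt (fun x => f x - c) z = meromorphicOrderAt f z := by
  rw [show (fun x => f x - c) = f + fun _ => -c from funext fun x => sub_eq_add_neg _ _]
  exact meromorphicOrderAt_add_eq_left_of_lt (.const (-c) z)
    (hneg.trans_le analyticAt_const.meromorphicOrderAt_nonneg)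

/-- The order of the pole of `f` at `p`; it is `0` where `f` has no pole. -/
noncomputable def poleOrder (f : ℂ → ℂ) (p : ℂ) : ℕ := (-orderAt f p).toNat

namespace MeroOn

variable {f : ℂ → ℂ}

theorem meromorphic (hf : MeroOn f) : Meromorphic f :=
  fun p => (hasOrderAt_iff.1 (hf p).choose_spec).1

theorem coe_orderAt (hf : MeroOn f) (p : ℂ) :
    (orderAt f p : WithTop ℤ) = meromorphicOrderAt f p := by
  rw [orderAt, dif_pos (hf p)]
  exact (hasOrderAt_iff.1 (hf p).choose_spec).2.symm

theorem isPole_iff (hf : MeroOn f) {p : ℂ} : IsPole f p ↔ orderAt f p < 0 := by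
  rw [IsPole, tendsto_norm_atTop_iff_cobounded,
    tendsto_cobounded_iff_meromorphicOrderAt_neg (hf.meromorphic p), ← hf.coe_orderAt]
  exact_mod_cast Iff.rfl

theorem poleOrder_pos_iff (hf : MeroOn f) {p : ℂ} : 0 < poleOrder f p ↔ IsPole f p := by
  rw [hf.isPole_iff, poleOrder]
  omega

theorem natAbs_orderAt_of_isPole (hf : MeroOn f) {p : ℂ} (hp : IsPole f p) :
    (orderAt f p).natAbs = poleOrder f p := by
  rw [hf.isPole_iff] at hp
  rw [poleOrder]
  omega

theorem periodic_poleOrder (hf : MeroOn f) {c : ℂ} (hc : Periodic f c) :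
    Periodic (poleOrder f) c := fun z => by
  have : orderAt f (z + c) = orderAt f z := by
    exact_mod_cast (hf.coe_orderAt _).trans ((hc.meromorphicOrderAt_add z).trans
      (hf.coe_orderAt z).symm)
  rw [poleOrder, poleOrder, this]

theorem meromorphicOrderAt_eq_neg_one_of_poleOrder_eq_one (hf : MeroOn f) {p : ℂ}
    (hp : poleOrder f p = 1) : meromorphicOrderAt f p = -1 := by
  rw [poleOrder] at hp
  rw [← hf.coe_orderAt, show orderAt f p = -1 by omega]
  rfl

end MeroOn

namespace Finset

variable {α G : Type*} [AddCommGroup G]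

theorem eq_one_of_sum_eq_three [DecidableEq α] {s : Finset α} {σ : α → α} {w : α → ℕ}
    (hσ : ∀ x ∈ s, σ x ∈ s) (hfix : ∀ x ∈ s, σ x ≠ x) (hw : ∀ x ∈ s, w (σ x) = w x)
    (hpos : ∀ x ∈ s, 0 < w x) (hsum : ∑ x ∈ s, w x = 3) {x : α} (hx : x ∈ s) : w x = 1 := by
  have : w x + w (σ x) ≤ 3 := by
    rw [← hsum, ← sum_pair (hfix x hx).symm]
    exact sum_le_sum_of_subset (by simp [insert_subset_iff, hx, hσ x hx])
  have := hw x hx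
  have := hpos x hx
  omega

theorem card_nsmul_mem_of_forall_sub_mem [DecidableEq G] (H : AddSubgroup G) {s : Finset G}
    {σ : G → G} {t : G} (hσ : ∀ x ∈ s, σ x ∈ s) (hinj : Set.InjOn σ s)
    (hH : ∀ x ∈ s, x + t - σ x ∈ H) : #s • t ∈ H := by
  have himage : s.image σ = s :=
    eq_of_subset_of_card_le (image_subset_iff.2 hσ) (card_image_of_injOn hinj).ge
  have hσsum : ∑ x ∈ s, σ x = ∑ x ∈ s, x := by
    conv_rhs => rw [← himage]
    exact (sum_image (f := fun y : G => y) hinj).symm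
  have hsum : ∑ x ∈ s, (x + t - σ x) = #s • t := by
    rw [sum_sub_distrib, sum_add_distrib, hσsum, sum_const, add_sub_cancel_left]
  exact hsum ▸ H.sum_mem hH

theorem sub_mem_of_card_le_three (H : AddSubgroup G) {s : Finset G} {σ : G → G}
    (hσ : ∀ x ∈ s, σ x ∈ s) (hfix : ∀ x ∈ s, σ x ≠ x) (hH : ∀ x ∈ s, σ x - x ∈ H)
    (hcard : #s ≤ 3) {x y : G} (hx : x ∈ s) (hy : y ∈ s) : y - x ∈ H := by
  classical
  by_contra hyx
  have hσH : ∀ z ∈ s, σ z - x ∈ H ↔ z - x ∈ H := fun z hz => by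
    rw [← sub_add_sub_cancel _ z, add_mem_cancel_left (hH z hz)]
  have hin : 1 < #(s.filter (· - x ∈ H)) := one_lt_card.2
    ⟨x, by simp [hx], σ x, by simp [hσ x hx, hσH x hx], (hfix x hx).symm⟩
  have hout : 1 < #(s.filter (· - x ∉ H)) := one_lt_card.2
    ⟨y, by simp [hy, hyx], σ y, by simp [hσ y hy, hσH y hy, hyx], (hfix y hy).symm⟩
  have := card_filter_add_card_filter_not (s := s) (· - x ∈ H)
  omega

end Finset

namespace PeriodPair

open Finset

variable (L : PeriodPair)

theorem latticeOf_eq : latticeOf L.ω₁ L.ω₂ = L.lattice := by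
  ext z
  simp [latticeOf, mem_lattice, eq_comm]

theorem fundDomain_eq : fundDomain L.ω₁ L.ω₂ = ZSpan.fundamentalDomain L.basis := by
  ext z
  rw [ZSpan.mem_fundamentalDomain, Fin.forall_fin_two]
  constructor
  · rintro ⟨s, t, hs, ht, rfl⟩
    have : (s : ℂ) * L.ω₁ + t * L.ω₂ = s • L.basis 0 + t • L.basis 1 := by
      simp [Complex.real_smul]
    rw [this]
    simp only [map_add, map_smul, Module.Basis.repr_self]
    simpa [Finsupp.single_apply] using ⟨hs, ht⟩
  · rintro ⟨hs, ht⟩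
    refine ⟨_, _, hs, ht, ?_⟩
    conv_lhs => rw [← L.basis.sum_repr z]
    simp [Fin.sum_univ_two, Complex.real_smul]

theorem periodic_of_mem_lattice {β : Type*} {f : ℂ → β} (h₁ : Periodic f L.ω₁)
    (h₂ : Periodic f L.ω₂) {l : ℂ} (hl : l ∈ L.lattice) : Periodic f l :=
  periodic_of_mem_span (s := {L.ω₁, L.ω₂}) (by rintro c (rfl | rfl); exacts [h₁, h₂]) hl

theorem sub_fract_mem_lattice (z : ℂ) : z - ZSpan.fract L.basis z ∈ L.lattice := by
  rw [ZSpan.fract_apply, sub_sub_cancel, lattice_eq_span_range_basis]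
  exact (ZSpan.floor _ z).2

theorem apply_fract {β : Type*} {w : ℂ → β} (hw : ∀ l ∈ L.lattice, Periodic w l) (z : ℂ) :
    w (ZSpan.fract L.basis z) = w z := by
  conv_lhs => rw [← sub_sub_cancel z (ZSpan.fract L.basis z)]
  exact (hw _ (L.sub_fract_mem_lattice z)).sub_eq z

theorem injOn_fract_add (t : ℂ) :
    Set.InjOn (fun z => ZSpan.fract L.basis (z + t)) (ZSpan.fundamentalDomain L.basis) :=
  fun x hx y hy hxy => by
    rw [← ZSpan.fract_eq_self.2 hx, ← ZSpan.fract_eq_self.2 hy, ZSpan.fract_eq_fract]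
    convert (ZSpan.fract_eq_fract _ _ _).1 hxy using 1
    ring

def latticeAdjoin (t : ℂ) : Submodule ℤ ℂ := Submodule.span ℤ (insert t L.lattice)

theorem lattice_le_latticeAdjoin (t : ℂ) : L.lattice ≤ L.latticeAdjoin t :=
  fun _ hl => Submodule.subset_span (Set.mem_insert_of_mem _ hl)

theorem periodic_of_mem_latticeAdjoin {β : Type*} {f : ℂ → β} {t : ℂ}
    (hL : ∀ l ∈ L.lattice, Periodic f l) (ht : Periodic f t) {c : ℂ}
    (hc : c ∈ L.latticeAdjoin t) : Periodic f c :=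
  periodic_of_mem_span (Set.forall_mem_insert.2 ⟨ht, hL⟩) hc

theorem three_smul_mem_lattice {t : ℂ} (h3t : (3 : ℤ) • t ∈ L.lattice) {x : ℂ}
    (hx : x ∈ L.latticeAdjoin t) : (3 : ℤ) • x ∈ L.lattice := by
  induction hx using Submodule.span_induction with
  | mem x hx =>
    rcases hx with rfl | hx
    exacts [h3t, L.lattice.smul_mem 3 hx]
  | zero => simp
  | add x y _ _ hx hy => simpa [smul_add] using add_mem hx hy
  | smul n x _ hx =>
    rw [smul_comm]
    exact L.lattice.smul_mem n hx

theorem exists_coset_of_sum_eq_three {t : ℂ} (ht : t ∉ L.lattice) {w : ℂ → ℕ}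
    (hwL : ∀ l ∈ L.lattice, Periodic w l) (hwt : Periodic w t) {P : Finset ℂ}
    (hP : ∀ z, z ∈ P ↔ z ∈ ZSpan.fundamentalDomain L.basis ∧ 0 < w z)
    (hsum : ∑ z ∈ P, w z = 3) :
    (3 : ℤ) • t ∈ L.lattice ∧
      ∃ q, ∀ z, (0 < w z ↔ z - q ∈ L.latticeAdjoin t) ∧ (0 < w z → w z = 1) := by
  set σ : ℂ → ℂ := fun z => ZSpan.fract L.basis (z + t)
  have hσt (z : ℂ) : z + t - σ z ∈ L.lattice := L.sub_fract_mem_lattice (z + t)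
  have hwσ (z : ℂ) : w (σ z) = w z := (L.apply_fract hwL _).trans (hwt z)
  have hσP : ∀ z ∈ P, σ z ∈ P := fun z hz =>
    (hP _).2 ⟨ZSpan.fract_mem_fundamentalDomain _ _, (hwσ z).symm ▸ ((hP z).1 hz).2⟩
  have hfix : ∀ z ∈ P, σ z ≠ z := fun z _ hσz => ht (by simpa [hσz] using hσt z)
  have hone : ∀ z ∈ P, w z = 1 := fun z hz =>
    eq_one_of_sum_eq_three hσP hfix (fun z _ => hwσ z) (fun z hz => ((hP z).1 hz).2) hsum hz
  have hcard : #P = 3 := by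
    rw [card_eq_sum_ones, ← hsum]
    exact sum_congr rfl fun z hz => (hone z hz).symm
  have h3t : #P • t ∈ L.lattice := card_nsmul_mem_of_forall_sub_mem L.lattice.toAddSubgroup hσP
    ((L.injOn_fract_add t).mono fun z hz => ((hP z).1 hz).1) fun z _ => hσt z
  obtain ⟨q, hq⟩ : P.Nonempty := card_pos.1 (by omega)
  have hcoset : ∀ x ∈ P, x - q ∈ L.latticeAdjoin t := fun x hx =>
    sub_mem_of_card_le_three (L.latticeAdjoin t).toAddSubgroup hσP hfix
      (fun z _ => by
        rw [show σ z - z = t - (z + t - σ z) by ring]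
        exact sub_mem (Submodule.subset_span (Set.mem_insert _ _))
          (L.lattice_le_latticeAdjoin t (hσt z)))
      hcard.le hq hx
  have hfract {z : ℂ} (hz : 0 < w z) : ZSpan.fract L.basis z ∈ P :=
    (hP _).2 ⟨ZSpan.fract_mem_fundamentalDomain _ _, by rwa [L.apply_fract hwL]⟩
  refine ⟨by simpa [hcard] using h3t, q, fun z => ⟨⟨fun hz => ?_, fun hz => ?_⟩, fun hz => ?_⟩⟩
  · rw [← sub_add_sub_cancel _ (ZSpan.fract L.basis z)]
    exact add_mem (L.lattice_le_latticeAdjoin t (L.sub_fract_mem_lattice z)) (hcoset _ (hfract hz))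
  · rw [← sub_add_cancel z q, add_comm, L.periodic_of_mem_latticeAdjoin hwL hwt hz]
    exact ((hP q).1 hq).2
  · rw [← L.apply_fract hwL]
    exact hone _ (hfract hz)

end PeriodPair

def HasRemovableSingularityAt (u : ℂ → ℂ) (z : ℂ) : Prop :=
  ∃ w : ℂ → ℂ, AnalyticAt ℂ w z ∧ u =ᶠ[𝓝[≠] z] w

theorem hasRemovableSingularityAt_of_eq_inv_sub_mul {u h : ℂ → ℂ} {z : ℂ}
    (hh : AnalyticAt ℂ h z) (hz : h z = 0) (hu : ∀ᶠ x in 𝓝[≠] z, u x = (x - z)⁻¹ * h x) :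
    HasRemovableSingularityAt u z := by
  obtain ⟨p, hp⟩ := hh
  refine ⟨dslope h z, hp.has_fpower_series_dslope_fslope.analyticAt, ?_⟩
  filter_upwards [hu, self_mem_nhdsWithin] with x hx hxz
  rw [hx, dslope_of_ne _ hxz, slope_def_module, hz, sub_zero, smul_eq_mul]

theorem MeromorphicAt.exists_eq_inv_sub_mul {f : ℂ → ℂ} {z : ℂ} (hf : MeromorphicAt f z)
    (hord : -1 ≤ meromorphicOrderAt f z) :
    ∃ g : ℂ → ℂ, AnalyticAt ℂ g z ∧ ∀ᶠ x in 𝓝[≠] z, f x = (x - z)⁻¹ * g x := by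
  cases h : meromorphicOrderAt f z with
  | top =>
    refine ⟨0, analyticAt_const, ?_⟩
    filter_upwards [meromorphicOrderAt_eq_top_iff.1 h] with x hx
    simp [hx]
  | coe n =>
    obtain ⟨g, hg, -, hfg⟩ := (meromorphicOrderAt_eq_int_iff hf).1 h
    have hn : (-1 : ℤ) ≤ n := WithTop.coe_le_coe.1 (h ▸ hord)
    refine ⟨fun x => (x - z) ^ (n + 1) * g x,
      ((analyticAt_id.sub analyticAt_const).zpow_nonneg (by omega)).mul hg, ?_⟩
    filter_upwards [hfg, self_mem_nhdsWithin] with x hx hxz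
    have hxz : x - z ≠ 0 := sub_ne_zero.2 hxz
    rw [hx, smul_eq_mul, zpow_add₀ hxz, zpow_one]
    field_simp

/-- The residues of the two summands at `z` cancel. -/
theorem MeromorphicAt.hasRemovableSingularityAt_add_reflect {f : ℂ → ℂ} {z : ℂ}
    (hf : MeromorphicAt f z) (hord : -1 ≤ meromorphicOrderAt f z) :
    HasRemovableSingularityAt (fun x => f x + f (2 * z - x)) z := by
  obtain ⟨g, hg, hfg⟩ := hf.exists_eq_inv_sub_mul hord
  have hreflect : Tendsto (fun x => 2 * z - x) (𝓝[≠] z) (𝓝[≠] z) := by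
    have h : map (fun x => 2 * z - x) (𝓝[≠] z) = 𝓝[≠] (2 * z - z) :=
      (Homeomorph.subLeft (2 * z)).map_punctured_nhds_eq z
    rw [show 2 * z - z = z by ring] at h
    exact h.le
  have hg' : AnalyticAt ℂ (fun x => g (2 * z - x)) z :=
    hg.comp_of_eq (f := fun x => 2 * z - x) (by fun_prop) (by ring)
  refine hasRemovableSingularityAt_of_eq_inv_sub_mul (hg.sub hg') (by simp [two_mul]) ?_
  filter_upwards [hfg, hreflect.eventually hfg] with x h₁ h₂
  rw [h₁, h₂, show 2 * z - x - z = -(x - z) by ring, inv_neg, Pi.sub_apply]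
  ring

theorem MeromorphicAt.hasRemovableSingularityAt_mul {f g : ℂ → ℂ} {z : ℂ}
    (hf : MeromorphicAt f z) (hord : -1 ≤ meromorphicOrderAt f z) (hg : AnalyticAt ℂ g z)
    (hgz : g z = 0) : HasRemovableSingularityAt (fun x => f x * g x) z := by
  obtain ⟨G, hG, hfG⟩ := hf.exists_eq_inv_sub_mul hord
  refine hasRemovableSingularityAt_of_eq_inv_sub_mul (hG.mul hg) (by simp [hgz]) ?_
  filter_upwards [hfG] with x hx
  rw [hx, mul_assoc, Pi.mul_apply]

namespace HasRemovableSingularityAt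

variable {u : ℂ → ℂ} {z : ℂ}

theorem tendsto_limUnder (h : HasRemovableSingularityAt u z) :
    Tendsto u (𝓝[≠] z) (𝓝 (limUnder (𝓝[≠] z) u)) := by
  obtain ⟨w, hw, huw⟩ := h
  have := hw.continuousAt.continuousWithinAt.tendsto.congr' huw.symm
  rwa [this.limUnder_eq]

theorem analyticAt_limUnder (h : HasRemovableSingularityAt u z) :
    AnalyticAt ℂ (fun y => limUnder (𝓝[≠] y) u) z := by
  obtain ⟨w, hw, huw⟩ := h
  have hnear : ∀ᶠ y in 𝓝 z, u =ᶠ[𝓝[≠] y] w := by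
    filter_upwards [(eventually_nhdsWithin_iff.1 huw).eventually_nhds] with y hy
    rcases eq_or_ne y z with rfl | hyz
    · exact huw
    · exact nhdsWithin_le_nhds (hy.mp ((eventually_ne_nhds hyz).mono fun x hx h => h hx))
  refine hw.congr ?_
  filter_upwards [hnear, hw.eventually_analyticAt] with y hy hwy
  exact ((hwy.continuousAt.continuousWithinAt.tendsto.congr' hy.symm).limUnder_eq).symm

end HasRemovableSingularityAt

theorem PeriodPair.exists_eq_const_of_hasRemovableSingularityAt (L : PeriodPair) {u : ℂ → ℂ}
    (hper : ∀ l ∈ L.lattice, Periodic u l) (hu : ∀ z, HasRemovableSingularityAt u z) :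
    ∃ c, ∀ z, ContinuousAt u z → u z = c := by
  set V : ℂ → ℂ := fun y => limUnder (𝓝[≠] y) u
  have hV : Differentiable ℂ V := fun z => (hu z).analyticAt_limUnder.differentiableAt
  have hVper (z l : ℂ) (hl : l ∈ L.lattice) : V (z + l) = V z := by
    have h : map (· + l) (𝓝[≠] z) = 𝓝[≠] (z + l) :=
      (Homeomorph.addRight l).map_punctured_nhds_eq z
    simp only [V, limUnder, ← h, Filter.map_map]
    exact congrArg (fun F => lim (map F (𝓝[≠] z))) (funext (hper l hl))
  have hbdd := (IsZLattice.isCompact_range_of_periodic L.lattice V hV.continuous hVper).isBounded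
  refine ⟨V 0, fun z hz => ?_⟩
  rw [← hV.apply_eq_apply_of_bounded hbdd z 0]
  exact tendsto_nhds_unique (hz.tendsto.mono_left nhdsWithin_le_nhds) (hu z).tendsto_limUnder

namespace PeriodPair

variable (L : PeriodPair) {Λ : Submodule ℤ ℂ} {f : ℂ → ℂ} {q : ℂ}

theorem exists_apply_eq_of_two_mul_mem (hL : L.lattice ≤ Λ) (hper : ∀ c ∈ Λ, Periodic f c)
    (hf : Meromorphic f) (hana : ∀ z, z - q ∉ Λ → AnalyticAt ℂ f z)
    (hq : meromorphicOrderAt f q = -1) : ∃ c, ∀ μ, 2 * μ ∈ Λ → μ ∉ Λ → f (q + μ) = c := by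
  set u : ℂ → ℂ := fun x => f x + f (2 * q - x)
  have hu_ana (z : ℂ) (hz : z - q ∉ Λ) : AnalyticAt ℂ u z := by
    have hz' : 2 * q - z - q ∉ Λ := by rwa [show 2 * q - z - q = -(z - q) by ring, neg_mem_iff]
    exact (hana z hz).add ((hana _ hz').comp_of_eq (f := fun x => 2 * q - x) (by fun_prop) rfl)
  have hu_rem (z : ℂ) : HasRemovableSingularityAt u z := by
    by_cases hz : z - q ∈ Λ
    · have h2 : 2 * (q - z) ∈ Λ := by simpa [zsmul_eq_mul, mul_sub] using Λ.smul_mem (-2 : ℤ) hz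
      have hu : u = fun x => f x + f (2 * z - x) := funext fun x => by
        simp only [u]
        rw [show 2 * q - x = 2 * z - x + 2 * (q - z) by ring, hper _ h2]
      have hord : meromorphicOrderAt f z = -1 := by
        simpa using ((hper _ hz).meromorphicOrderAt_add q).trans hq
      exact hu ▸ (hf z).hasRemovableSingularityAt_add_reflect hord.ge
    · exact ⟨u, hu_ana z hz, .rfl⟩
  have hu_per (l : ℂ) (hl : l ∈ L.lattice) : Periodic u l := fun x => by
    simp only [u]
    rw [hper l (hL hl), show 2 * q - (x + l) = 2 * q - x - l by ring, (hper l (hL hl)).sub_eq]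
  obtain ⟨c, hc⟩ := L.exists_eq_const_of_hasRemovableSingularityAt hu_per hu_rem
  refine ⟨c / 2, fun μ h2μ hμ => ?_⟩
  have hcμ := hc (q + μ) (hu_ana _ (by simpa using hμ)).continuousAt
  have hsym : f (2 * q - (q + μ)) = f (q + μ) := by
    rw [show 2 * q - (q + μ) = q + μ - 2 * μ by ring, (hper _ h2μ).sub_eq]
  simp only [u, hsym] at hcμ
  linear_combination hcμ / 2

theorem hasRemovableSingularityAt_mul_add (hper : ∀ c ∈ Λ, Periodic f c) (hf : Meromorphic f)
    (hana : ∀ z, z - q ∉ Λ → AnalyticAt ℂ f z) (hq : meromorphicOrderAt f q = -1)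
    (hzero : ∀ μ, 2 * μ ∈ Λ → μ ∉ Λ → f (q + μ) = 0) {μ : ℂ} (h2μ : 2 * μ ∈ Λ) (hμ : μ ∉ Λ)
    (z : ℂ) : HasRemovableSingularityAt (fun x => f x * f (x + μ)) z := by
  have hord (z : ℂ) (hz : z - q ∈ Λ) : -1 ≤ meromorphicOrderAt f z := by
    simpa using (((hper _ hz).meromorphicOrderAt_add q).trans hq).ge
  have hana_add (z : ℂ) (hz : z + μ - q ∉ Λ) : AnalyticAt ℂ (fun x => f (x + μ)) z :=
    (hana _ hz).comp_of_eq (f := fun x => x + μ) (by fun_prop) rfl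
  by_cases hz : z - q ∈ Λ
  · have hzμ : z + μ - q ∉ Λ := by rwa [add_sub_right_comm, add_mem_cancel_left hz]
    have h2 : 2 * (z - q + μ) ∈ Λ := by
      have := add_mem (Λ.smul_mem (2 : ℤ) hz) h2μ
      rwa [zsmul_eq_mul, Int.cast_ofNat, ← mul_add] at this
    have hfzμ := hzero (z - q + μ) h2 (by rwa [← add_sub_right_comm])
    rw [show q + (z - q + μ) = z + μ by ring] at hfzμ
    exact (hf z).hasRemovableSingularityAt_mul (hord z hz) (hana_add z hzμ) hfzμ
  by_cases hzμ : z + μ - q ∈ Λ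
  · have h2 : 2 * (z - q) ∈ Λ := by
      have := sub_mem (Λ.smul_mem (2 : ℤ) hzμ) h2μ
      rwa [zsmul_eq_mul, Int.cast_ofNat, show 2 * (z + μ - q) - 2 * μ = 2 * (z - q) by ring]
        at this
    have hfz : f z = 0 := by simpa using hzero (z - q) h2 hz
    have hord' : -1 ≤ meromorphicOrderAt (fun x => f (x + μ)) z := by
      rw [meromorphicOrderAt_fun_comp_add_const_eq_meromorphicOrderAt]
      simpa using hord _ hzμ
    rw [show (fun x => f x * f (x + μ)) = fun x => f (x + μ) * f x from
      funext fun x => mul_comm _ _]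
    exact ((hf _).comp_analyticAt (by fun_prop)).hasRemovableSingularityAt_mul hord'
      (hana z hz) hfz
  exact ⟨_, (hana z hz).mul (hana_add z hzμ), .rfl⟩

theorem eventually_mul_add_eq_zero (hL : L.lattice ≤ Λ) (hper : ∀ c ∈ Λ, Periodic f c)
    (hf : Meromorphic f) (hana : ∀ z, z - q ∉ Λ → AnalyticAt ℂ f z)
    (hq : meromorphicOrderAt f q = -1) (hzero : ∀ μ, 2 * μ ∈ Λ → μ ∉ Λ → f (q + μ) = 0)
    {μ ν : ℂ} (h2μ : 2 * μ ∈ Λ) (h2ν : 2 * ν ∈ Λ) (hμ : μ ∉ Λ) (hν : ν ∉ Λ)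
    (hμν : μ + ν ∉ Λ) : ∀ᶠ x in 𝓝[≠] q, f x * f (x + μ) = 0 := by
  set K : ℂ → ℂ := fun x => f x * f (x + μ)
  have hK_ana (x : ℂ) (h₁ : AnalyticAt ℂ f x) (h₂ : AnalyticAt ℂ f (x + μ)) : AnalyticAt ℂ K x :=
    h₁.mul (h₂.comp_of_eq (f := fun x => x + μ) (by fun_prop) rfl)
  have hK_per (l : ℂ) (hl : l ∈ L.lattice) : Periodic K l := fun x => by
    simp only [K]
    rw [hper l (hL hl), add_right_comm, hper l (hL hl)]
  obtain ⟨c, hc⟩ := L.exists_eq_const_of_hasRemovableSingularityAt hK_per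
    (hasRemovableSingularityAt_mul_add hper hf hana hq hzero h2μ hμ)
  have hc0 : c = 0 := by
    rw [← hc (q + ν) (hK_ana _ (hana _ (by simpa))
      (hana _ (by rwa [show q + ν + μ - q = μ + ν by ring]))).continuousAt]
    simp [K, hzero ν h2ν hν]
  have hnear : ∀ᶠ x in 𝓝 q, AnalyticAt ℂ f (x + μ) :=
    ((continuous_add_const μ).tendsto q).eventually (hana (q + μ) (by simpa)).eventually_analyticAt
  filter_upwards [(hf q).eventually_analyticAt, nhdsWithin_le_nhds hnear] with x h₁ h₂
  exact (hc x (hK_ana x h₁ h₂).continuousAt).trans hc0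

theorem meromorphicOrderAt_ne_neg_one (hL : L.lattice ≤ Λ) (hper : ∀ c ∈ Λ, Periodic f c)
    (hf : Meromorphic f) (hana : ∀ z, z - q ∉ Λ → AnalyticAt ℂ f z) {μ ν : ℂ}
    (h2μ : 2 * μ ∈ Λ) (h2ν : 2 * ν ∈ Λ) (hμ : μ ∉ Λ) (hν : ν ∉ Λ) (hμν : μ + ν ∉ Λ) :
    meromorphicOrderAt f q ≠ -1 := by
  intro hq
  obtain ⟨c, hc⟩ := L.exists_apply_eq_of_two_mul_mem hL hper hf hana hq
  set g : ℂ → ℂ := fun x => f x - c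
  have hg : Meromorphic g := hf.sub (.const c)
  have hgq : meromorphicOrderAt g q = -1 :=
    (meromorphicOrderAt_sub_const (by rw [hq]; decide) c).trans hq
  have hK := L.eventually_mul_add_eq_zero hL (fun l hl x => by simp [g, hper l hl x]) hg
    (fun z hz => (hana z hz).sub analyticAt_const) hgq (fun μ h₁ h₂ => by simp [g, hc μ h₁ h₂])
    h2μ h2ν hμ hν hμν
  have htop : meromorphicOrderAt (g * (g ∘ (· + μ))) q = ⊤ := meromorphicOrderAt_eq_top_iff.2 hK
  rw [meromorphicOrderAt_mul (hg q) ((hg _).comp_analyticAt (by fun_prop)), hgq,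
    meromorphicOrderAt_comp_add_const_eq_meromorphicOrderAt, WithTop.add_eq_top] at htop
  exact hg.exists_meromorphicOrderAt_ne_top_iff_forall.1 ⟨q, by simp [hgq]⟩ (q + μ)
    (htop.resolve_left (by simp))

theorem meromorphicOrderAt_ne_neg_one_of_three_smul_mem {t : ℂ} (h3t : (3 : ℤ) • t ∈ L.lattice)
    (hper : ∀ c ∈ L.latticeAdjoin t, Periodic f c) (hf : Meromorphic f)
    (hana : ∀ z, z - q ∉ L.latticeAdjoin t → AnalyticAt ℂ f z) :
    meromorphicOrderAt f q ≠ -1 := by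
  have hhalf (α β : ℚ) (hαβ : (3 * α).den ≠ 1 ∨ (3 * β).den ≠ 1) :
      (α : ℂ) * L.ω₁ + β * L.ω₂ ∉ L.latticeAdjoin t := fun h => by
    have := L.three_smul_mem_lattice h3t h
    rw [zsmul_eq_mul, show ((3 : ℤ) : ℂ) * (α * L.ω₁ + β * L.ω₂) =
      ((3 * α : ℚ) : ℂ) * L.ω₁ + ((3 * β : ℚ) : ℂ) * L.ω₂ by push_cast; ring,
      mul_ω₁_add_mul_ω₂_mem_lattice] at this
    exact hαβ.elim (· this.1) (· this.2)
  refine L.meromorphicOrderAt_ne_neg_one (L.lattice_le_latticeAdjoin t) hper hf hana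
    (μ := L.ω₁ / 2) (ν := L.ω₂ / 2) ?_ ?_ ?_ ?_ ?_
  · rw [mul_div_cancel₀ _ two_ne_zero]
    exact L.lattice_le_latticeAdjoin t L.ω₁_mem_lattice
  · rw [mul_div_cancel₀ _ two_ne_zero]
    exact L.lattice_le_latticeAdjoin t L.ω₂_mem_lattice
  · convert hhalf (1 / 2) 0 (by norm_num) using 2
    push_cast
    ring
  · convert hhalf 0 (1 / 2) (by norm_num) using 2
    push_cast
    ring
  · convert hhalf (1 / 2) (1 / 2) (by norm_num) using 2
    push_cast
    ring

end PeriodPair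

/-- the translation action of the torus `X = ℂ/Γ` on degree-3
elliptic functions by pre-composition is free: if `f(z - t) = f(z)` for all
`z`, then `t = 0` in `X`, i.e. `t ∈ Γ`. -/
theorem translation_action_free_degree_three (ω₁ ω₂ : ℂ)
    (h : LinearIndependent ℝ ![ω₁, ω₂]) (f : ℂ → ℂ)
    (hf : MeroOn f)
    (hper₁ : ∀ z, f (z + ω₁) = f z) (hper₂ : ∀ z, f (z + ω₂) = f z)
    (hcont : ∀ p, ¬ IsPole f p → ContinuousAt f p)
    (hdeg : HasDegree ω₁ ω₂ f 3)
    (t : ℂ) (ht : ∀ z : ℂ, f (z - t) = f z) :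
    t ∈ latticeOf ω₁ ω₂ := by
  let L : PeriodPair := ⟨ω₁, ω₂, h⟩
  change t ∈ latticeOf L.ω₁ L.ω₂
  rw [L.latticeOf_eq]
  by_contra htL
  have hL (l : ℂ) (hl : l ∈ L.lattice) : Periodic f l := L.periodic_of_mem_lattice hper₁ hper₂ hl
  have htper : Periodic f t := fun z => by simpa using (ht (z + t)).symm
  obtain ⟨P, hP, hsum⟩ := hdeg
  have hPmem (z : ℂ) : z ∈ P ↔ z ∈ fundDomain ω₁ ω₂ ∧ IsPole f z := by
    rw [← Finset.mem_coe, hP]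
    rfl
  have hPw (z : ℂ) : z ∈ P ↔ z ∈ ZSpan.fundamentalDomain L.basis ∧ 0 < poleOrder f z := by
    rw [hPmem, hf.poleOrder_pos_iff, ← L.fundDomain_eq]
  have hsum' : ∑ z ∈ P, poleOrder f z = 3 := hsum ▸ Finset.sum_congr rfl fun z hz =>
    (hf.natAbs_orderAt_of_isPole ((hPmem z).1 hz).2).symm
  obtain ⟨h3t, q, hq⟩ := L.exists_coset_of_sum_eq_three htL
    (fun l hl => hf.periodic_poleOrder (hL l hl)) (hf.periodic_poleOrder htper) hPw hsum'
  refine L.meromorphicOrderAt_ne_neg_one_of_three_smul_mem h3t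
    (fun c => L.periodic_of_mem_latticeAdjoin hL htper) hf.meromorphic (fun z hz => ?_)
    (hf.meromorphicOrderAt_eq_neg_one_of_poleOrder_eq_one ((hq q).2 ((hq q).1.2 (by simp))))
  have hz' : ¬ IsPole f z := by rwa [← hf.poleOrder_pos_iff, (hq z).1]
  exact (hf.meromorphic z).analyticAt (hcont z hz')
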